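/- arXiv:1904.04658 — 3 statements merged into one kernel-verified Lean document; each statement's English description precedes it below -/
import Mathlib

section
/- Let X and Y be discrete uniformly proper metric spaces that are quasi-isometric. Then Growth(X) = Growth(Y), i.e., for any non-empty finite subsets A ⊆ X and B ⊆ Y, the growth functions β_{X,A} and β_{Y,B} have equivalent growth rate. -/
/-- The growth comparison relation: `f ≼ g` iff there is `C > 0` with
`f n ≤ C * g (C*n + C) + C` for all `n`. -/
def GrowthLE (f g : ℕ → ℕ) : Prop :=
  ∃ C : ℕ, 0 < C ∧ ∀ n, f n ≤ C * g (C * n + C) + C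

/-- Equivalence of growth rates. -/
def GrowthEquiv (f g : ℕ → ℕ) : Prop := GrowthLE f g ∧ GrowthLE g f

/-- The growth function of a subset `U` of a metric space, with basepoint set `A`:
`n ↦ #(U ∩ B(A, n))`. -/
noncomputable def relGrowth {X : Type*} [MetricSpace X] (U A : Set X) : ℕ → ℕ :=
  fun n => Set.ncard {x | x ∈ U ∧ ∃ a ∈ A, dist a x ≤ (n : ℝ)}

/-- A metric space is discrete and proper iff all balls (of integer radius) are finite. -/
def DiscreteProper (X : Type*) [MetricSpace X] : Prop :=
  ∀ (x : X) (n : ℕ), {y : X | dist x y ≤ (n : ℝ)}.Finite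

/-- Uniformly proper: there is a uniform bound on cardinalities of all balls of radius `n`. -/
def UniformlyProper (X : Type*) [MetricSpace X] : Prop :=
  ∃ g : ℕ → ℕ, ∀ (x : X) (n : ℕ),
    {y : X | dist x y ≤ (n : ℝ)}.Finite ∧ Set.ncard {y : X | dist x y ≤ (n : ℝ)} ≤ g n

/-- A `c`-quasi-isometry between metric spaces. -/
def IsQuasiIsometryMS {X Y : Type*} [MetricSpace X] [MetricSpace Y] (c : ℝ) (φ : X → Y) : Prop :=
  1 ≤ c ∧
  (∀ a b : X, dist a b / c - c ≤ dist (φ a) (φ b) ∧ dist (φ a) (φ b) ≤ c * dist a b + c) ∧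
  (∀ y : Y, ∃ x : X, dist (φ x) y ≤ c)

/-- Growth function of `U ⊆ V(G)` (with the metric induced by the path-metric of `G`)
with respect to basepoint set `A`. -/
noncomputable def graphGrowth {V : Type*} (G : SimpleGraph V) (U A : Set V) : ℕ → ℕ :=
  fun n => Set.ncard {v | v ∈ U ∧ ∃ a ∈ A, G.dist a v ≤ n}

/-- `Growth(U) = Growth(G)` for `U` a set of vertices of `G` with the induced metric. -/
def GrowthEqFull {V : Type*} (G : SimpleGraph V) (U : Set V) : Prop :=
  ∃ u₀ ∈ U, GrowthEquiv (graphGrowth G Set.univ {u₀}) (graphGrowth G U {u₀})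

/-- The set of vertices protected up to (and including) time `n`. -/
def protectedUpTo {V : Type*} (W : ℕ → Set V) (n : ℕ) : Set V :=
  ⋃ i ∈ Finset.Icc 1 n, W i

/-- The set of vertices on fire at time `n`, for fire reach `r`, strategy `W` and
initial fire `X0`: `X (n+1)` consists of vertices joined to `X n` by a path of length
at most `r` avoiding `(W 1 ∪ ⋯ ∪ W (n+1)) \ X n`. -/
def fireSet {V : Type*} (G : SimpleGraph V) (r : ℕ) (W : ℕ → Set V) (X0 : Set V) : ℕ → Set V
  | 0 => X0
  | n + 1 =>
    {v | ∃ u ∈ fireSet G r W X0 n, ∃ p : G.Walk u v, p.length ≤ r ∧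
      ∀ x ∈ p.support, x ∉ protectedUpTo W (n + 1) \ fireSet G r W X0 n}

/-- The set of vertices on fire at the end of the game. -/
def burnedSet {V : Type*} (G : SimpleGraph V) (r : ℕ) (W : ℕ → Set V) (X0 : Set V) : Set V :=
  ⋃ n, fireSet G r W X0 n

/-- An `{f n}`-strategy: at each time `n ≥ 1` at most `f n` vertices are protected. -/
def IsStrategyBound {V : Type*} (f : ℕ → ℕ) (W : ℕ → Set V) : Prop :=
  ∀ n, 1 ≤ n → (W n).Finite ∧ (W n).ncard ≤ f n

/-- A finite-step strategy protects no vertices after some finite time. -/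
def FiniteStepStrategy {V : Type*} (W : ℕ → Set V) : Prop :=
  ∃ N, ∀ n, N ≤ n → W n = ∅

/-- A retaining `({f n}, r)`-strategy for the initial fire `X0`. -/
def IsRetainingStrategy {V : Type*} (G : SimpleGraph V) (f : ℕ → ℕ) (r : ℕ)
    (X0 : Set V) (W : ℕ → Set V) : Prop :=
  IsStrategyBound f W ∧ GrowthEqFull G (burnedSet G r W X0)ᶜ

/-- The `({f n}, r)`-retaining property. -/
def RetainingProperty {V : Type*} (G : SimpleGraph V) (f : ℕ → ℕ) (r : ℕ) : Prop :=
  ∀ X0 : Set V, X0.Finite → ∃ W, IsRetainingStrategy G f r X0 W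

/-- Polynomial retaining property of degree `d` (fire reach one). -/
def PolyRetaining {V : Type*} (G : SimpleGraph V) (d : ℕ) : Prop :=
  ∃ K : ℕ, 0 < K ∧ RetainingProperty G (fun n => K * n ^ d) 1

/-- The finite-step `{f n}`-retaining property (fire reach one). -/
def FiniteStepRetainingProperty {V : Type*} (G : SimpleGraph V) (f : ℕ → ℕ) : Prop :=
  ∀ X0 : Set V, X0.Finite → ∃ W, IsRetainingStrategy G f 1 X0 W ∧ FiniteStepStrategy W

/-- The finite-step polynomial retaining property of degree `d`. -/
def FiniteStepPolyRetaining {V : Type*} (G : SimpleGraph V) (d : ℕ) : Prop :=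
  ∃ K : ℕ, 0 < K ∧ FiniteStepRetainingProperty G (fun n => K * n ^ d)

/-- The `({f n}, r)`-containment property. -/
def ContainmentProperty {V : Type*} (G : SimpleGraph V) (f : ℕ → ℕ) (r : ℕ) : Prop :=
  ∀ X0 : Set V, X0.Finite →
    ∃ W, IsStrategyBound f W ∧ (burnedSet G r W X0).Finite

/-- Polynomial containment property of degree `d` (fire reach one). -/
def PolyContainment {V : Type*} (G : SimpleGraph V) (d : ℕ) : Prop :=
  ∃ K : ℕ, 0 < K ∧ ContainmentProperty G (fun n => K * n ^ d) 1

/-- The constant containment property. -/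
def ConstantContainment {V : Type*} (G : SimpleGraph V) : Prop := PolyContainment G 0

/-- `D` is (the vertex set of) a connected component of `G \ K`. -/
def ComponentAvoiding {V : Type*} (G : SimpleGraph V) (K D : Set V) : Prop :=
  D.Nonempty ∧ D ⊆ Kᶜ ∧
  (∀ u ∈ D, ∀ v ∈ D, ∃ p : G.Walk u v, ∀ x ∈ p.support, x ∉ K) ∧
  (∀ u ∈ D, ∀ v : V, v ∉ K → (∃ p : G.Walk u v, ∀ x ∈ p.support, x ∉ K) → v ∈ D)

/-- A deep component of `G \ K`: not contained in any bounded neighborhood of `K`. -/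
def IsDeepComponent {V : Type*} (G : SimpleGraph V) (K D : Set V) : Prop :=
  ComponentAvoiding G K D ∧ ∀ r : ℕ, ¬ D ⊆ {v | ∃ k ∈ K, G.dist k v ≤ r}

/-- An unbounded component of `G \ K`. -/
def IsUnboundedComponent {V : Type*} (G : SimpleGraph V) (K D : Set V) : Prop :=
  ComponentAvoiding G K D ∧ ∀ (v : V) (r : ℕ), ¬ D ⊆ {u | G.dist v u ≤ r}

/-- Uniformly locally finite graph: vertex degrees are bounded. -/
def UnifLocFinite {V : Type*} (G : SimpleGraph V) : Prop :=
  ∃ M : ℕ, ∀ v : V, (G.neighborSet v).Finite ∧ (G.neighborSet v).ncard ≤ M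

/-- Locally finite graph. -/
def LocFinite {V : Type*} (G : SimpleGraph V) : Prop := ∀ v : V, (G.neighborSet v).Finite

/-- A `c`-quasi-isometry between two connected graphs (with their path-metrics). -/
def GraphQI {V V' : Type*} (c : ℝ) (G : SimpleGraph V) (H : SimpleGraph V') (φ : V → V') : Prop :=
  1 ≤ c ∧
  (∀ a b : V, (G.dist a b : ℝ) / c - c ≤ (H.dist (φ a) (φ b) : ℝ) ∧
    (H.dist (φ a) (φ b) : ℝ) ≤ c * (G.dist a b : ℝ) + c) ∧
  (∀ y : V', ∃ x : V, (H.dist (φ x) y : ℝ) ≤ c)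

/-- The Cayley graph of a group with respect to a set `S`. -/
def cayley (G : Type) [Group G] (S : Set G) : SimpleGraph G :=
  SimpleGraph.fromRel (fun a b => a⁻¹ * b ∈ S)

/-- `S` is a finite generating set. -/
def IsFiniteGenSet {G : Type} [Group G] (S : Set G) : Prop :=
  S.Finite ∧ Subgroup.closure S = ⊤

/-- The ball of radius `n` around the identity for the word metric w.r.t. `T`. -/
def wordBall {G : Type} [Group G] (T : Set G) (n : ℕ) : Set G :=
  {g | ∃ l : List G, (∀ x ∈ l, x ∈ T ∨ x⁻¹ ∈ T) ∧ l.length ≤ n ∧ l.prod = g}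

/-- The word metric w.r.t. `T`. -/
noncomputable def wordDist {G : Type} [Group G] (T : Set G) (x y : G) : ℕ :=
  sInf {n | x⁻¹ * y ∈ wordBall T n}

/-- `G` is an amalgamated product `A ∗_C B` with `C` a proper subgroup of both factors,
where `C` corresponds to the given subgroup. -/
def SplitsOverAmalgam (G : Type) [Group G] (C : Subgroup G) : Prop :=
  ∃ (Gi : Bool → Type) (_ : ∀ i, Group (Gi i)) (K : Type) (_ : Group K)
    (φ : ∀ i, K →* Gi i),
    (∀ i, Function.Injective (φ i)) ∧ (∀ i, ¬ Function.Surjective (φ i)) ∧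
    ∃ e : G ≃* Monoid.PushoutI φ,
      C = Subgroup.comap e.toMonoidHom (Monoid.PushoutI.base φ).range

/-- `G` is an HNN-extension over the given subgroup `C`. -/
def SplitsOverHNN (G : Type) [Group G] (C : Subgroup G) : Prop :=
  ∃ (H : Type) (_ : Group H) (A B : Subgroup H) (φ : A ≃* B)
    (e : G ≃* HNNExtension H A B φ),
    C = Subgroup.comap e.toMonoidHom
      (Subgroup.map (HNNExtension.of : H →* HNNExtension H A B φ) A)

/-- `G` splits over `C`: amalgamated product with `C` proper in both factors,
or HNN-extension over `C`. -/
def SplitsOver (G : Type) [Group G] (C : Subgroup G) : Prop :=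
  SplitsOverAmalgam G C ∨ SplitsOverHNN G C

/-- Amenability of a (discrete) group: existence of a left-invariant, finitely
additive probability measure defined on all subsets. -/
def IsAmenable (G : Type) [Group G] : Prop :=
  ∃ m : Set G → ℝ, (∀ A : Set G, 0 ≤ m A) ∧ m Set.univ = 1 ∧
    (∀ A B : Set G, Disjoint A B → m (A ∪ B) = m A + m B) ∧
    (∀ (g : G) (A : Set G), m ((g * ·) '' A) = m A)



/-! A quasi-isometry `φ` and a quasi-inverse `ψ` (chosen by coarse surjectivity) are both coarsely
Lipschitz with uniformly bounded fibres. A coarsely Lipschitz map sends the `n`-neighbourhood of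
`A` into a linearly larger neighbourhood of `B`, and uniform properness bounds the size of each
fibre, so counting fibrewise gives `β_A ≼ β_B` via `φ` and `β_B ≼ β_A` via `ψ`. -/

open Set

lemma Set.ncard_le_mul_ncard_of_mapsTo {α β : Type*} {s : Set α} {t : Set β} {f : α → β}
    (hs : s.Finite) (ht : t.Finite) (hf : MapsTo f s t) (k : ℕ)
    (hk : ∀ y ∈ t, (s ∩ f ⁻¹' {y}).ncard ≤ k) : s.ncard ≤ k * t.ncard := by
  classical
  rw [ncard_eq_toFinset_card s hs, ncard_eq_toFinset_card t ht]
  refine Finset.card_le_mul_card_image_of_maps_to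
    (fun x hx => by simpa using hf (by simpa using hx)) k fun y hy => ?_
  rw [← ncard_coe_finset]
  convert hk y (by simpa using hy) using 2
  ext x
  simp

lemma Set.Finite.exists_nat_dist_le {X : Type*} [PseudoMetricSpace X] {s : Set X}
    (hs : s.Finite) (x : X) : ∃ M : ℕ, ∀ y ∈ s, dist x y ≤ M := by
  obtain ⟨r, hr⟩ := hs.isBounded.subset_closedBall x
  refine ⟨⌈r⌉₊, fun y hy => ?_⟩
  rw [dist_comm]
  exact (hr hy).trans (Nat.le_ceil r)

lemma dist_le_of_comp_eq {X Y : Type*} [PseudoMetricSpace Y] {φ : X → Y} {ψ : Y → X} {c : ℝ}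
    (hψ : ∀ y, dist (φ (ψ y)) y ≤ c) {y₁ y₂ : Y} (h : ψ y₁ = ψ y₂) :
    dist y₁ y₂ ≤ 2 * c := by
  calc dist y₁ y₂ ≤ dist (φ (ψ y₁)) y₁ + dist (φ (ψ y₂)) y₂ := by
        rw [h]; exact dist_triangle_left _ _ _
    _ ≤ 2 * c := by linarith [hψ y₁, hψ y₂]

section

variable {X Y : Type*} [MetricSpace X] [MetricSpace Y]

lemma relGrowth_univ (A : Set X) (n : ℕ) :
    relGrowth univ A n = {x | ∃ a ∈ A, dist a x ≤ n}.ncard := by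
  simp [relGrowth]

lemma UniformlyProper.finite_nbhd (h : UniformlyProper X) {A : Set X} (hA : A.Finite) (n : ℕ) :
    {x | ∃ a ∈ A, dist a x ≤ n}.Finite := by
  obtain ⟨g, hg⟩ := h
  refine (hA.biUnion fun a _ => (hg a n).1).subset ?_
  rintro x ⟨a, ha, hax⟩
  exact mem_biUnion ha hax

lemma UniformlyProper.exists_ncard_le (h : UniformlyProper X) (D : ℝ) :
    ∃ k : ℕ, ∀ s : Set X, (∀ x ∈ s, ∀ y ∈ s, dist x y ≤ D) → s.ncard ≤ k := by
  obtain ⟨g, hg⟩ := h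
  refine ⟨g ⌈D⌉₊, fun s hs => ?_⟩
  rcases s.eq_empty_or_nonempty with rfl | ⟨x₀, hx₀⟩
  · simp
  have hsub : s ⊆ {y | dist x₀ y ≤ (⌈D⌉₊ : ℝ)} := fun y hy =>
    (hs x₀ hx₀ y hy).trans (Nat.le_ceil D)
  exact (ncard_le_ncard hsub (hg x₀ ⌈D⌉₊).1).trans (hg x₀ ⌈D⌉₊).2

lemma exists_mapsTo_nbhd_of_dist_le {A : Set X} {B : Set Y} (hA : A.Finite) (hB : B.Nonempty)
    {f : X → Y} {K : ℝ} (hf : ∀ a x, dist (f a) (f x) ≤ K * dist a x + K) :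
    ∃ C : ℕ, ∀ (n : ℕ) (x : X), (∃ a ∈ A, dist a x ≤ n) →
      ∃ b ∈ B, dist b (f x) ≤ C * n + C := by
  obtain ⟨b₀, hb₀⟩ := hB
  obtain ⟨M, hM⟩ := (hA.image f).exists_nat_dist_le b₀
  refine ⟨⌈K⌉₊ + M, fun n x ⟨a, ha, hax⟩ => ⟨b₀, hb₀, ?_⟩⟩
  have hfax : dist (f a) (f x) ≤ ⌈K⌉₊ * n + ⌈K⌉₊ :=
    calc dist (f a) (f x) ≤ K * dist a x + K := hf a x
      _ ≤ ⌈K⌉₊ * dist a x + ⌈K⌉₊ := by gcongr <;> exact Nat.le_ceil K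
      _ ≤ ⌈K⌉₊ * n + ⌈K⌉₊ := by gcongr
  calc dist b₀ (f x) ≤ dist b₀ (f a) + dist (f a) (f x) := dist_triangle _ _ _
    _ ≤ M + (⌈K⌉₊ * n + ⌈K⌉₊) := add_le_add (hM _ (mem_image_of_mem f ha)) hfax
    _ ≤ ((⌈K⌉₊ + M : ℕ) : ℝ) * n + (⌈K⌉₊ + M : ℕ) := by
      push_cast; nlinarith [(n.cast_nonneg : (0 : ℝ) ≤ n)]

lemma growthLE_relGrowth_of_mapsTo_nbhd (hX : UniformlyProper X) (hY : UniformlyProper Y)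
    {A : Set X} {B : Set Y} (hA : A.Finite) (hB : B.Finite) {f : X → Y} {C : ℕ} {D : ℝ}
    (hmap : ∀ (n : ℕ) (x : X), (∃ a ∈ A, dist a x ≤ n) →
      ∃ b ∈ B, dist b (f x) ≤ C * n + C)
    (hfib : ∀ x₁ x₂, f x₁ = f x₂ → dist x₁ x₂ ≤ D) :
    GrowthLE (relGrowth univ A) (relGrowth univ B) := by
  obtain ⟨k, hk⟩ := hX.exists_ncard_le D
  refine ⟨C + k + 1, by omega, fun n => ?_⟩
  have hmapsTo : MapsTo f {x | ∃ a ∈ A, dist a x ≤ n}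
      {y | ∃ b ∈ B, dist b y ≤ ((C + k + 1) * n + (C + k + 1) : ℕ)} := by
    intro x hx
    obtain ⟨b, hb, hbx⟩ := hmap n x hx
    refine ⟨b, hb, hbx.trans ?_⟩
    push_cast
    gcongr <;> linarith
  have hcount := ncard_le_mul_ncard_of_mapsTo (hX.finite_nbhd hA n) (hY.finite_nbhd hB _)
    hmapsTo k fun _ _ => hk _ fun x₁ hx₁ x₂ hx₂ => hfib x₁ x₂ (hx₁.2.trans hx₂.2.symm)
  rw [relGrowth_univ, relGrowth_univ]
  exact le_add_right (hcount.trans (Nat.mul_le_mul_right _ (by omega)))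

lemma growthLE_relGrowth_of_dist_le (hX : UniformlyProper X) (hY : UniformlyProper Y)
    {A : Set X} {B : Set Y} (hA : A.Finite) (hB : B.Finite) (hBne : B.Nonempty) {f : X → Y}
    {K D : ℝ} (hf : ∀ a x, dist (f a) (f x) ≤ K * dist a x + K)
    (hfib : ∀ x₁ x₂, f x₁ = f x₂ → dist x₁ x₂ ≤ D) :
    GrowthLE (relGrowth univ A) (relGrowth univ B) := by
  obtain ⟨C, hC⟩ := exists_mapsTo_nbhd_of_dist_le hA hBne hf
  exact growthLE_relGrowth_of_mapsTo_nbhd hX hY hA hB hC hfib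

namespace IsQuasiIsometryMS

variable {c : ℝ} {φ : X → Y}

lemma dist_le_mul_dist_map_add (h : IsQuasiIsometryMS c φ) (a b : X) :
    dist a b ≤ c * (dist (φ a) (φ b) + c) := by
  obtain ⟨hc, hqi, -⟩ := h
  have := (hqi a b).1
  rw [div_sub' (by positivity), div_le_iff₀ (by positivity)] at this
  linarith

lemma dist_le_of_eq (h : IsQuasiIsometryMS c φ) {a b : X} (hab : φ a = φ b) :
    dist a b ≤ c * c := by
  simpa [hab] using h.dist_le_mul_dist_map_add a b

lemma dist_quasiInverse_le (h : IsQuasiIsometryMS c φ) {ψ : Y → X}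
    (hψ : ∀ y, dist (φ (ψ y)) y ≤ c) (y₁ y₂ : Y) :
    dist (ψ y₁) (ψ y₂) ≤ 3 * c ^ 2 * dist y₁ y₂ + 3 * c ^ 2 := by
  have hc : 1 ≤ c := h.1
  have hφψ : dist (φ (ψ y₁)) (φ (ψ y₂)) ≤ dist y₁ y₂ + 2 * c := by
    linarith [dist_triangle4 (φ (ψ y₁)) y₁ y₂ (φ (ψ y₂)), hψ y₁, hψ y₂,
      dist_comm (φ (ψ y₂)) y₂]
  calc dist (ψ y₁) (ψ y₂) ≤ c * (dist (φ (ψ y₁)) (φ (ψ y₂)) + c) :=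
        h.dist_le_mul_dist_map_add _ _
    _ ≤ c * (dist y₁ y₂ + 3 * c) := mul_le_mul_of_nonneg_left (by linarith) (by linarith)
    _ ≤ 3 * c ^ 2 * dist y₁ y₂ + 3 * c ^ 2 := by
      have hc' : 0 ≤ c * (3 * c - 1) := mul_nonneg (by linarith) (by linarith)
      nlinarith [mul_nonneg hc' (dist_nonneg (x := y₁) (y := y₂))]

end IsQuasiIsometryMS

end

theorem stmt4 {X Y : Type*} [MetricSpace X] [MetricSpace Y]
    (hX : UniformlyProper X) (hY : UniformlyProper Y)
    (c : ℝ) (φ : X → Y) (hφ : IsQuasiIsometryMS c φ)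
    (A : Set X) (B : Set Y) (hA : A.Finite) (hAne : A.Nonempty)
    (hB : B.Finite) (hBne : B.Nonempty) :
    GrowthEquiv (relGrowth Set.univ A) (relGrowth Set.univ B) := by
  choose ψ hψ using hφ.2.2
  exact ⟨growthLE_relGrowth_of_dist_le hX hY hA hB hBne (fun a x => (hφ.2.1 a x).2)
      fun _ _ => hφ.dist_le_of_eq,
    growthLE_relGrowth_of_dist_le hY hX hB hA hAne (hφ.dist_quasiInverse_le hψ)
      (fun _ _ => dist_le_of_comp_eq hψ)⟩
end

section
/- Let G be a connected graph with an initial fire X_0 of reach 1 and a retaining {f_n}-strategy {W_n}_{n≥1} with X_n ∩ W_{n+1} = ∅ for all n. For a positive integer r, set V_n = W_{(n-1)r+1} ∪ ⋯ ∪ W_{nr} and a_n = f_{(n-1)r+1} + ⋯ + f_{nr}. Then {V_n}_{n≥1} is an {a_n}-strategy for the initial fire X_0 of reach r, and the set of vertices on fire at time n under {V_n} with reach r equals X_{rn}; in particular the total burned sets coincide, so {V_n} is a retaining ({a_n}, r)-strategy for X_0. -/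
/-!
With reach one, a vertex catches fire during the `k` rounds after time `m` exactly when it is
joined to the fire of time `m` by a walk of length at most `k` meeting no vertex protected by
time `m + k`, except vertices already burning at time `m`; the hypothesis that firefighters
are never placed on burning vertices is what makes every walk along which the fire spreads
avoid the protected vertices. A round of the reach-`r` game protected by `V n` is then the
same as the `r` rounds `(n - 1) r + 1, …, n r` of the reach-one game, so by induction the
fires agree at times `n` and `r n`.
-/

open SimpleGraph

section Fire

variable {V : Type*} {G : SimpleGraph V} {r : ℕ} {W : ℕ → Set V} {X0 : Set V}

lemma protectedUpTo_add (W : ℕ → Set V) (m k : ℕ) :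
    protectedUpTo W (m + k) = protectedUpTo W m ∪ ⋃ i ∈ Finset.Icc (m + 1) (m + k), W i := by
  classical
  have hIcc : Finset.Icc 1 (m + k) = Finset.Icc 1 m ∪ Finset.Icc (m + 1) (m + k) := by
    ext i; simp only [Finset.mem_union, Finset.mem_Icc]; omega
  rw [protectedUpTo, hIcc, Finset.set_biUnion_union, protectedUpTo]

lemma protectedUpTo_succ (W : ℕ → Set V) (n : ℕ) :
    protectedUpTo W (n + 1) = protectedUpTo W n ∪ W (n + 1) := by
  rw [protectedUpTo_add, Finset.Icc_self, Finset.set_biUnion_singleton]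

lemma protectedUpTo_mono : Monotone (protectedUpTo W) := fun m n hmn => by
  obtain ⟨k, rfl⟩ := Nat.exists_eq_add_of_le hmn
  rw [protectedUpTo_add]
  exact Set.subset_union_left

lemma fireSet_mono : Monotone (fireSet G r W X0) :=
  monotone_nat_of_le_succ fun n v hv =>
    ⟨v, hv, .nil, Nat.zero_le r, fun x hx hxP => by
      rw [Walk.support_nil, List.mem_singleton] at hx
      exact hxP.2 (hx ▸ hv)⟩

lemma support_subset_fireSet_succ {n : ℕ} {u v : V} (hu : u ∈ fireSet G r W X0 n)
    (p : G.Walk u v) (hp : p.length ≤ r)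
    (havoid : ∀ x ∈ p.support, x ∉ protectedUpTo W (n + 1) \ fireSet G r W X0 n) :
    ∀ x ∈ p.support, x ∈ fireSet G r W X0 (n + 1) := by
  classical
  intro x hx
  exact ⟨u, hu, p.takeUntil x hx, (p.length_takeUntil_le_length hx).trans hp,
    fun y hy => havoid y (p.support_takeUntil_subset_support hx hy)⟩

lemma exists_walk_of_mem_fireSet_add (m : ℕ) :
    ∀ k, ∀ v ∈ fireSet G r W X0 (m + k), ∃ u ∈ fireSet G r W X0 m, ∃ p : G.Walk u v,
      p.length ≤ r * k ∧ ∀ x ∈ p.support, x ∈ fireSet G r W X0 (m + k)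
  | 0, v, hv => ⟨v, hv, .nil, Nat.zero_le _, by simpa using hv⟩
  | k + 1, v, ⟨w, hw, q, hq, havoid⟩ => by
    obtain ⟨u, hu, p, hp, hsupp⟩ := exists_walk_of_mem_fireSet_add m k w hw
    refine ⟨u, hu, p.append q, ?_, fun x hx => ?_⟩
    · rw [Walk.length_append, Nat.mul_succ]
      omega
    · rcases (Walk.mem_support_append_iff p q).mp hx with hx | hx
      · exact fireSet_mono (Nat.le_succ _) (hsupp x hx)
      · exact support_subset_fireSet_succ hw q hq havoid x hx

lemma notMem_protectedUpTo_of_mem_fireSet (hdisj : ∀ n, fireSet G r W X0 n ∩ W (n + 1) = ∅) :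
    ∀ n, ∀ v ∈ fireSet G r W X0 n, v ∉ protectedUpTo W n
  | 0, v, _, hv => by simp [protectedUpTo] at hv
  | n + 1, v, ⟨u, hu, p, hp, havoid⟩, hvP => by
    have hvX : v ∈ fireSet G r W X0 n := by
      by_contra hvX
      exact havoid v p.end_mem_support ⟨hvP, hvX⟩
    rw [protectedUpTo_succ] at hvP
    rcases hvP with hvP | hvW
    · exact notMem_protectedUpTo_of_mem_fireSet hdisj n v hvX hvP
    · exact (Set.eq_empty_iff_forall_notMem.mp (hdisj n)) v ⟨hvX, hvW⟩

lemma mem_fireSet_one_add_of_walk {u v : V} (p : G.Walk u v) :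
    ∀ {m k : ℕ}, p.length ≤ k → u ∈ fireSet G 1 W X0 m →
      (∀ x ∈ p.support, x ∉ protectedUpTo W (m + k) \ fireSet G 1 W X0 m) →
      v ∈ fireSet G 1 W X0 (m + k) := by
  induction p with
  | nil => exact fun _ hu _ => fireSet_mono (Nat.le_add_right _ _) hu
  | @cons a b c hab p ih =>
    intro m k hlen ha havoid
    obtain ⟨k, rfl⟩ : ∃ k', k = k' + 1 := ⟨k - 1, by simp at hlen; omega⟩
    have hb : b ∈ fireSet G 1 W X0 (m + 1) := by
      refine ⟨a, ha, .cons hab .nil, le_rfl, fun x hx hxP => ?_⟩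
      simp only [Walk.support_cons, Walk.support_nil, List.mem_cons, List.not_mem_nil,
        or_false] at hx
      rcases hx with rfl | rfl
      · exact hxP.2 ha
      · exact havoid x (by simp) ⟨protectedUpTo_mono (by omega) hxP.1, hxP.2⟩
    have hmk : m + 1 + k = m + (k + 1) := by omega
    rw [← hmk]
    refine ih (by simpa using hlen) hb fun x hx hxP => havoid x (by simp [hx]) ?_
    rw [hmk] at hxP
    exact ⟨hxP.1, fun hxm => hxP.2 (fireSet_mono (Nat.le_succ m) hxm)⟩

lemma mem_fireSet_one_add_iff (hdisj : ∀ n, fireSet G 1 W X0 n ∩ W (n + 1) = ∅)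
    {m k : ℕ} {v : V} :
    v ∈ fireSet G 1 W X0 (m + k) ↔ ∃ u ∈ fireSet G 1 W X0 m, ∃ p : G.Walk u v,
      p.length ≤ k ∧ ∀ x ∈ p.support, x ∉ protectedUpTo W (m + k) \ fireSet G 1 W X0 m := by
  constructor
  · intro hv
    obtain ⟨u, hu, p, hp, hsupp⟩ := exists_walk_of_mem_fireSet_add m k v hv
    exact ⟨u, hu, p, by simpa using hp, fun x hx hxP =>
      notMem_protectedUpTo_of_mem_fireSet hdisj _ x (hsupp x hx) hxP.1⟩
  · rintro ⟨u, hu, p, hp, havoid⟩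
    exact mem_fireSet_one_add_of_walk p hp hu havoid

end Fire

section Blocks

variable {V : Type*} {f a : ℕ → ℕ} {W Vs : ℕ → Set V} {r : ℕ}

lemma protectedUpTo_blocks (hV : ∀ n, Vs n = ⋃ i ∈ Finset.Icc ((n - 1) * r + 1) (n * r), W i)
    (n : ℕ) : protectedUpTo Vs n = protectedUpTo W (r * n) := by
  induction n with
  | zero => simp [protectedUpTo]
  | succ n ih =>
    rw [protectedUpTo_succ, ih, hV, Nat.add_sub_cancel, Nat.mul_succ r n, protectedUpTo_add,
      Nat.add_one_mul, Nat.mul_comm n r]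

lemma IsStrategyBound.blocks (hW : IsStrategyBound f W)
    (ha : ∀ n, a n = ∑ i ∈ Finset.Icc ((n - 1) * r + 1) (n * r), f i)
    (hV : ∀ n, Vs n = ⋃ i ∈ Finset.Icc ((n - 1) * r + 1) (n * r), W i) :
    IsStrategyBound a Vs := by
  intro n _
  have hWi : ∀ i ∈ Finset.Icc ((n - 1) * r + 1) (n * r), (W i).Finite ∧ (W i).ncard ≤ f i :=
    fun i hi => hW i (by simp only [Finset.mem_Icc] at hi; omega)
  rw [hV, ha]
  exact ⟨(Finset.finite_toSet _).biUnion fun i hi => (hWi i hi).1,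
    (Finset.set_ncard_biUnion_le _ _).trans (Finset.sum_le_sum fun i hi => (hWi i hi).2)⟩

end Blocks

theorem stmt7_general {V : Type*} (G : SimpleGraph V)
    (f a : ℕ → ℕ) (W Vs : ℕ → Set V) (X0 : Set V)
    (r : ℕ) (hr : 1 ≤ r)
    (hW : IsRetainingStrategy G f 1 X0 W)
    (hdisj : ∀ n, fireSet G 1 W X0 n ∩ W (n + 1) = ∅)
    (ha : ∀ n, a n = ∑ i ∈ Finset.Icc ((n - 1) * r + 1) (n * r), f i)
    (hV : ∀ n, Vs n = ⋃ i ∈ Finset.Icc ((n - 1) * r + 1) (n * r), W i) :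
    IsStrategyBound a Vs ∧
    (∀ n, fireSet G r Vs X0 n = fireSet G 1 W X0 (r * n)) ∧
    burnedSet G r Vs X0 = burnedSet G 1 W X0 ∧
    IsRetainingStrategy G a r X0 Vs := by
  have hbound : IsStrategyBound a Vs := hW.1.blocks ha hV
  have hfire : ∀ n, fireSet G r Vs X0 n = fireSet G 1 W X0 (r * n) := by
    intro n
    induction n with
    | zero => rfl
    | succ n ih =>
      ext v
      rw [Nat.mul_succ, mem_fireSet_one_add_iff hdisj, fireSet, Set.mem_ofPred_eq, ih,
        protectedUpTo_blocks hV, Nat.mul_succ]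
  have hburn : burnedSet G r Vs X0 = burnedSet G 1 W X0 := by
    simp only [burnedSet, hfire]
    exact fireSet_mono.iUnion_comp_tendsto_atTop
      (Filter.tendsto_atTop_mono (fun n => Nat.le_mul_of_pos_left n hr) Filter.tendsto_id)
  exact ⟨hbound, hfire, hburn, hbound, hburn ▸ hW.2⟩

theorem stmt7 {V : Type*} (G : SimpleGraph V) (hG : G.Connected)
    (f a : ℕ → ℕ) (W Vs : ℕ → Set V) (X0 : Set V) (hX0 : X0.Finite)
    (r : ℕ) (hr : 1 ≤ r)
    (hW : IsRetainingStrategy G f 1 X0 W)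
    (hdisj : ∀ n, fireSet G 1 W X0 n ∩ W (n + 1) = ∅)
    (ha : ∀ n, a n = ∑ i ∈ Finset.Icc ((n - 1) * r + 1) (n * r), f i)
    (hV : ∀ n, Vs n = ⋃ i ∈ Finset.Icc ((n - 1) * r + 1) (n * r), W i) :
    IsStrategyBound a Vs ∧
    (∀ n, fireSet G r Vs X0 n = fireSet G 1 W X0 (r * n)) ∧
    burnedSet G r Vs X0 = burnedSet G 1 W X0 ∧
    IsRetainingStrategy G a r X0 Vs :=
  stmt7_general G f a W Vs X0 r hr hW hdisj ha hV
end

section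
/- Let G be a finitely generated group that splits over a finitely generated subgroup C, let Γ be a Cayley graph of G with respect to a finite generating set, and let l > 0 be such that Γ \ B(C, l) has at least two deep components. If U is a set of vertices of Γ containing all vertices of some deep component of Γ \ B(C, l), then Growth(U) = Growth(G). -/
namespace SimpleGraph

variable {V W : Type*} {G : SimpleGraph V} {H : SimpleGraph W}

theorem Hom.edist_le (f : G →g H) (u v : V) : H.edist (f u) (f v) ≤ G.edist u v := by
  by_cases huv : G.Reachable u v
  · obtain ⟨p, hp⟩ := huv.exists_walk_length_eq_edist
    rw [← hp, ← p.length_map f]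
    exact SimpleGraph.edist_le _
  · simp [edist_eq_top_of_not_reachable huv]

theorem Iso.dist_eq (e : G ≃g H) (u v : V) : H.dist (e u) (e v) = G.dist u v := by
  have h₁ : H.edist (e u) (e v) ≤ G.edist u v := e.toHom.edist_le u v
  have h₂ : G.edist (e.symm (e u)) (e.symm (e v)) ≤ H.edist (e u) (e v) :=
    e.symm.toHom.edist_le (e u) (e v)
  simp only [RelIso.symm_apply_apply] at h₂
  rw [dist, dist, le_antisymm h₁ h₂]

theorem Connected.finite_setOf_dist_le (hconn : G.Connected) (hG : LocFinite G) (u : V)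
    (n : ℕ) : {v | G.dist u v ≤ n}.Finite := by
  suffices h : {v | ∃ p : G.Walk v u, p.length ≤ n}.Finite by
    refine h.subset fun v hv => ?_
    obtain ⟨p, hp⟩ := hconn.exists_walk_length_eq_dist v u
    exact ⟨p, by rw [hp, dist_comm]; exact hv⟩
  induction n with
  | zero =>
    refine (Set.finite_singleton u).subset fun v ⟨p, hp⟩ => ?_
    cases p with
    | nil => rfl
    | cons => simp at hp
  | succ n ih =>
    refine (ih.union (ih.biUnion fun w _ => hG w)).subset fun v ⟨p, hp⟩ => ?_
    cases p with
    | nil => exact Or.inl ⟨.nil, Nat.zero_le _⟩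
    | @cons _ w _ h q =>
      refine Or.inr (Set.mem_biUnion ⟨q, ?_⟩ (h.symm : G.Adj w v))
      simp only [Walk.length_cons] at hp
      omega

def ReachableAvoiding (G : SimpleGraph V) (K : Set V) (u v : V) : Prop :=
  ∃ p : G.Walk u v, ∀ x ∈ p.support, x ∉ K

namespace ReachableAvoiding

variable {K : Set V} {u v x : V}

theorem symm (h : G.ReachableAvoiding K u v) : G.ReachableAvoiding K v u :=
  let ⟨p, hp⟩ := h
  ⟨p.reverse, fun x hx => hp x (List.mem_reverse.1 (p.support_reverse ▸ hx))⟩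

theorem not_mem_right (h : G.ReachableAvoiding K u v) : v ∉ K :=
  let ⟨p, hp⟩ := h
  hp v p.end_mem_support

theorem map {K' : Set W} (f : G →g H) (hf : ∀ x, x ∉ K → f x ∉ K')
    (h : G.ReachableAvoiding K u v) : H.ReachableAvoiding K' (f u) (f v) :=
  let ⟨p, hp⟩ := h
  ⟨p.map f, fun y hy => by
    obtain ⟨x, hx, rfl⟩ := List.mem_map.1 ((p.support_map f) ▸ hy)
    exact hf x (hp x hx)⟩

theorem of_mem_support {p : G.Walk u v} (hp : ∀ y ∈ p.support, y ∉ K)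
    (hx : x ∈ p.support) : G.ReachableAvoiding K u x := by
  classical
  exact ⟨p.takeUntil x hx, fun y hy => hp y (p.support_takeUntil_subset_support hx hy)⟩

end ReachableAvoiding

namespace Walk

theorem exists_mem_support_eq_of_le_of_le {f : V → ℕ} {m : ℕ}
    (hf : ∀ a b, G.Adj a b → f b ≤ f a + 1) :
    ∀ {u v : V} (p : G.Walk u v), f u ≤ m → m ≤ f v → ∃ x ∈ p.support, f x = m
  | _, _, .nil, hu, hv => ⟨_, start_mem_support _, le_antisymm hu hv⟩
  | a, _, .cons h q, hu, hv => by
    by_cases hm : f a = m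
    · exact ⟨a, start_mem_support _, hm⟩
    · obtain ⟨x, hx, hxm⟩ := exists_mem_support_eq_of_le_of_le hf q (by grind) hv
      exact ⟨x, by simp [hx], hxm⟩

theorem exists_mem_support_reachableAvoiding_adj {K : Set V} :
    ∀ {u v : V} (p : G.Walk u v), u ∉ K → v ∈ K →
      ∃ y ∈ p.support, G.ReachableAvoiding K u y ∧ ∃ b ∈ K, G.Adj y b
  | _, _, .nil, hu, hv => absurd hv hu
  | a, _, .cons (v := b) h q, ha, hv => by
    by_cases hb : b ∈ K
    · exact ⟨a, start_mem_support _, ⟨.nil, by simpa using ha⟩, b, hb, h⟩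
    · obtain ⟨y, hy, ⟨r, hr⟩, hyK⟩ := exists_mem_support_reachableAvoiding_adj q hb hv
      refine ⟨y, by simp [hy], ⟨.cons h r, fun x hx => ?_⟩, hyK⟩
      rcases List.mem_cons.1 (support_cons h r ▸ hx) with rfl | hx
      exacts [ha, hr x hx]

end Walk

end SimpleGraph

theorem ComponentAvoiding.mem_of_reachableAvoiding {V : Type*} {G : SimpleGraph V}
    {K D : Set V} {u v : V} (hD : ComponentAvoiding G K D) (hu : u ∈ D)
    (h : G.ReachableAvoiding K u v) : v ∈ D :=
  hD.2.2.2 u hu v h.not_mem_right h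

theorem Set.Finite.exists_bound_of_exists {α β : Type*} {F : Set α} (hF : F.Finite)
    (R : α → β → Prop) (f : β → ℕ) :
    ∃ K, ∀ a ∈ F, (∃ b, R a b) → ∃ b, R a b ∧ f b ≤ K := by
  classical
  let g a := if h : ∃ b, R a b then f h.choose else 0
  obtain ⟨K, hK⟩ := (hF.image g).bddAbove
  refine ⟨K, fun a ha h => ⟨h.choose, h.choose_spec, ?_⟩⟩
  have := hK (Set.mem_image_of_mem g ha)
  simpa [g, dif_pos h] using this

theorem growthLE_of_le_comp {f g : ℕ → ℕ} (C : ℕ) (hC : 0 < C)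
    (h : ∀ n, f n ≤ g (C * n + C)) : GrowthLE f g :=
  ⟨C, hC, fun n => (h n).trans (le_add_right (Nat.le_mul_of_pos_left _ hC))⟩

theorem graphGrowth_singleton {V : Type*} (G : SimpleGraph V) (U : Set V) (u : V) (n : ℕ) :
    graphGrowth G U {u} n = Set.ncard {v | v ∈ U ∧ G.dist u v ≤ n} := by
  simp [graphGrowth]

theorem growthLE_graphGrowth_univ {V : Type*} {G : SimpleGraph V} (U : Set V) {u : V}
    (hfin : ∀ n : ℕ, {v | G.dist u v ≤ n}.Finite) :
    GrowthLE (graphGrowth G U {u}) (graphGrowth G Set.univ {u}) :=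
  growthLE_of_le_comp 1 one_pos fun n => by
    simp only [graphGrowth_singleton, Set.mem_univ, true_and]
    exact Set.ncard_le_ncard (fun v hv => hv.2.trans (by omega)) (hfin _)

section Cayley

open SimpleGraph

variable {G : Type} [Group G] {S : Set G}

theorem cayley_adj {a b : G} :
    (cayley G S).Adj a b ↔ a ≠ b ∧ (a⁻¹ * b ∈ S ∨ b⁻¹ * a ∈ S) := by
  simp [cayley, SimpleGraph.fromRel_adj]

def cayleyMulLeft (g : G) : cayley G S ≃g cayley G S where
  toEquiv := Equiv.mulLeft g
  map_rel_iff' := by simp [cayley_adj, mul_assoc]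

theorem cayley_dist_mul_left (g a b : G) :
    (cayley G S).dist (g * a) (g * b) = (cayley G S).dist a b :=
  (cayleyMulLeft g).dist_eq a b

theorem cayley_dist_one_inv (a : G) : (cayley G S).dist 1 a⁻¹ = (cayley G S).dist 1 a := by
  rw [← cayley_dist_mul_left a, mul_one, mul_inv_cancel, dist_comm]

theorem cayley_dist_one_mul_le (hconn : (cayley G S).Connected) (a b : G) :
    (cayley G S).dist 1 (a * b) ≤ (cayley G S).dist 1 a + (cayley G S).dist 1 b := by
  calc (cayley G S).dist 1 (a * b)
      ≤ (cayley G S).dist 1 a + (cayley G S).dist a (a * b) := hconn.dist_triangle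
    _ = (cayley G S).dist 1 a + (cayley G S).dist 1 b := by
      rw [← cayley_dist_mul_left a 1 b, mul_one]

theorem cayley_connected (hS : Subgroup.closure S = ⊤) : (cayley G S).Connected := by
  have : Nonempty G := ⟨1⟩
  have hmap : ∀ {a b : G} (g : G), (cayley G S).Reachable a b →
      (cayley G S).Reachable (g * a) (g * b) :=
    fun g h => h.map (cayleyMulLeft g).toHom
  have hone : ∀ x ∈ Subgroup.closure S, (cayley G S).Reachable 1 x := by
    intro x hx
    induction hx using Subgroup.closure_induction with
    | mem y hy =>
      by_cases hy1 : y = 1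
      · rw [hy1]
      · exact (cayley_adj.2 ⟨Ne.symm hy1, Or.inl (by simpa using hy)⟩).reachable
    | one => rfl
    | mul a b _ _ ha hb => exact ha.trans (by simpa using hmap a hb)
    | inv a _ ha => exact (by simpa using hmap a⁻¹ ha : (cayley G S).Reachable a⁻¹ 1).symm
  refine ⟨fun a b => ?_⟩
  simpa using hmap a (hone (a⁻¹ * b) (hS ▸ Subgroup.mem_top _))

theorem cayley_locFinite (hS : S.Finite) : LocFinite (cayley G S) := fun g =>
  ((hS.union hS.inv).image (g * ·)).subset fun x hx => by
    rcases (cayley_adj.1 hx).2 with h | h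
    · exact ⟨g⁻¹ * x, Or.inl h, mul_inv_cancel_left g x⟩
    · exact ⟨g⁻¹ * x, Or.inr (by simpa using h), mul_inv_cancel_left g x⟩

theorem cayley_ncard_setOf_dist_le (p u : G) (n : ℕ) :
    {v | (cayley G S).dist p v ≤ n}.ncard = {v | (cayley G S).dist u v ≤ n}.ncard := by
  rw [← Set.ncard_image_of_injective {v | (cayley G S).dist u v ≤ n}
    (mul_right_injective (p * u⁻¹))]
  congr 1
  ext v
  have h := cayley_dist_mul_left (S := S) (u * p⁻¹) p v
  rw [inv_mul_cancel_right] at h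
  rw [Set.image_mul_left, Set.mem_preimage, mul_inv_rev, inv_inv]
  exact (iff_of_eq (congrArg (· ≤ n) h)).symm

end Cayley

section DistToSubgroup

open SimpleGraph

variable {G : Type} [Group G] {S : Set G} {C : Subgroup G}

noncomputable def distToSubgroup (S : Set G) (C : Subgroup G) (x : G) : ℕ :=
  sInf ((fun c => (cayley G S).dist c x) '' C)

theorem exists_dist_eq_distToSubgroup (x : G) :
    ∃ c ∈ C, (cayley G S).dist c x = distToSubgroup S C x :=
  Nat.sInf_mem (Set.Nonempty.image _ ⟨1, C.one_mem⟩)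

theorem distToSubgroup_le_dist {c : G} (hc : c ∈ C) (x : G) :
    distToSubgroup S C x ≤ (cayley G S).dist c x :=
  Nat.sInf_le ⟨c, hc, rfl⟩

theorem distToSubgroup_of_mem {c : G} (hc : c ∈ C) : distToSubgroup S C c = 0 :=
  Nat.le_zero.1 ((distToSubgroup_le_dist hc c).trans_eq dist_self)

theorem distToSubgroup_mul_left {c : G} (hc : c ∈ C) (x : G) :
    distToSubgroup S C (c * x) = distToSubgroup S C x := by
  have key : ∀ d ∈ C, ∀ y : G, distToSubgroup S C (d * y) ≤ distToSubgroup S C y := by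
    intro d hd y
    obtain ⟨c₀, hc₀, hcy⟩ := exists_dist_eq_distToSubgroup (S := S) (C := C) y
    rw [← hcy, ← cayley_dist_mul_left d]
    exact distToSubgroup_le_dist (mul_mem hd hc₀) _
  refine le_antisymm (key c hc x) ?_
  simpa using key c⁻¹ (inv_mem hc) (c * x)

theorem distToSubgroup_le_add (hconn : (cayley G S).Connected) (x y : G) :
    distToSubgroup S C y ≤ distToSubgroup S C x + (cayley G S).dist x y := by
  obtain ⟨c, hc, hcx⟩ := exists_dist_eq_distToSubgroup (S := S) (C := C) x
  rw [← hcx]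
  exact (distToSubgroup_le_dist hc y).trans hconn.dist_triangle

def subgroupNbhd (S : Set G) (C : Subgroup G) (l : ℕ) : Set G :=
  {g | distToSubgroup S C g ≤ l}

theorem setOf_exists_dist_le_eq (l : ℕ) :
    {g | ∃ c ∈ (C : Set G), (cayley G S).dist c g ≤ l} = subgroupNbhd S C l := by
  ext g
  constructor
  · rintro ⟨c, hc, hcg⟩
    exact (distToSubgroup_le_dist hc g).trans hcg
  · intro hg
    obtain ⟨c, hc, hcg⟩ := exists_dist_eq_distToSubgroup (S := S) (C := C) g
    exact ⟨c, hc, hcg ▸ hg⟩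

theorem SimpleGraph.ReachableAvoiding.mul_left_of_mem {l : ℕ} {c x y : G} (hc : c ∈ C)
    (h : (cayley G S).ReachableAvoiding (subgroupNbhd S C l) x y) :
    (cayley G S).ReachableAvoiding (subgroupNbhd S C l) (c * x) (c * y) :=
  h.map (cayleyMulLeft c).toHom fun g hg => by
    simpa [cayleyMulLeft, subgroupNbhd, distToSubgroup_mul_left hc] using hg

end DistToSubgroup

section DeepComponent

open SimpleGraph

variable {G : Type} [Group G] {S : Set G} {C : Subgroup G} {l : ℕ} {D : Set G}

theorem exists_reachableAvoiding_near_subgroup (hconn : (cayley G S).Connected) {z : G}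
    (hz : z ∉ subgroupNbhd S C l) :
    ∃ y, (cayley G S).ReachableAvoiding (subgroupNbhd S C l) z y ∧
      (cayley G S).dist 1 y ≤ (cayley G S).dist 1 z ∧
      ∃ c ∈ C, (cayley G S).dist c y ≤ l + 1 := by
  classical
  obtain ⟨q, hq⟩ := hconn.exists_walk_length_eq_dist z 1
  have h1 : (1 : G) ∈ subgroupNbhd S C l := by
    simp [subgroupNbhd, distToSubgroup_of_mem C.one_mem]
  obtain ⟨y, hy, hzy, b, hb, hyb⟩ := q.exists_mem_support_reachableAvoiding_adj hz h1
  obtain ⟨c, hc, hcb⟩ := exists_dist_eq_distToSubgroup (S := S) (C := C) b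
  refine ⟨y, hzy, ?_, c, hc, ?_⟩
  · calc (cayley G S).dist 1 y = (cayley G S).dist y 1 := dist_comm
      _ ≤ (q.dropUntil y hy).length := dist_le _
      _ ≤ (cayley G S).dist 1 z := by
        rw [dist_comm, ← hq]; exact q.length_dropUntil_le_length hy
  · calc (cayley G S).dist c y ≤ (cayley G S).dist c b + (cayley G S).dist b y :=
          hconn.dist_triangle
      _ ≤ l + 1 := by rw [hcb, dist_eq_one_iff_adj.2 hyb.symm]; exact Nat.add_le_add_right hb 1

theorem ComponentAvoiding.exists_short_translate (hS : S.Finite)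
    (hconn : (cayley G S).Connected) (hD : ComponentAvoiding (cayley G S) (subgroupNbhd S C l) D) :
    ∃ K, ∀ z, ∀ c ∈ C, c * z ∈ D →
      ∃ g ∈ C, g * z ∈ D ∧ (cayley G S).dist 1 g ≤ K + (cayley G S).dist 1 z := by
  have hball := hconn.finite_setOf_dist_le (cayley_locFinite hS) 1 (l + 1)
  obtain ⟨K, hK⟩ :=
    hball.exists_bound_of_exists (fun h γ => γ ∈ C ∧ γ * h ∈ D) ((cayley G S).dist 1)
  refine ⟨K + l + 1, fun z c hc hcz => ?_⟩
  have hz : z ∉ subgroupNbhd S C l := by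
    simpa [subgroupNbhd, distToSubgroup_mul_left hc] using hD.2.1 hcz
  obtain ⟨y, hzy, hyz, cs, hcs, hcsy⟩ := exists_reachableAvoiding_near_subgroup hconn hz
  -- `y = cs * h` with `h` in the ball of radius `l + 1`, to which the finite choice applies
  set h := cs⁻¹ * y
  have hh : (cayley G S).dist 1 h ≤ l + 1 := by
    rwa [← cayley_dist_mul_left cs, mul_one, mul_inv_cancel_left]
  have hcy : c * cs * h ∈ D := by
    rw [mul_assoc, mul_inv_cancel_left]
    exact hD.mem_of_reachableAvoiding hcz (hzy.mul_left_of_mem hc)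
  obtain ⟨γ, ⟨hγ, hγh⟩, hγK⟩ := hK h hh ⟨c * cs, mul_mem hc hcs, hcy⟩
  have hg : γ * cs⁻¹ ∈ C := mul_mem hγ (inv_mem hcs)
  refine ⟨γ * cs⁻¹, hg, ?_, ?_⟩
  · have hgy : γ * cs⁻¹ * y ∈ D := by rwa [mul_assoc]
    exact hD.mem_of_reachableAvoiding hgy (hzy.mul_left_of_mem hg).symm
  · have hcs1 : (cayley G S).dist 1 cs ≤ (cayley G S).dist 1 z + (l + 1) :=
      (hconn.dist_triangle (v := y)).trans
        (Nat.add_le_add hyz (by rw [SimpleGraph.dist_comm]; exact hcsy))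
    calc (cayley G S).dist 1 (γ * cs⁻¹)
        ≤ (cayley G S).dist 1 γ + (cayley G S).dist 1 cs⁻¹ := cayley_dist_one_mul_le hconn _ _
      _ ≤ K + l + 1 + (cayley G S).dist 1 z := by rw [cayley_dist_one_inv]; omega

theorem ComponentAvoiding.mem_of_dist_le (hconn : (cayley G S).Connected)
    (hD : ComponentAvoiding (cayley G S) (subgroupNbhd S C l) D) {p v : G} (hp : p ∈ D) {n : ℕ}
    (hn : n + l < distToSubgroup S C p) (hv : (cayley G S).dist p v ≤ n) : v ∈ D := by
  classical
  obtain ⟨q, hq⟩ := hconn.exists_walk_length_eq_dist p v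
  refine hD.mem_of_reachableAvoiding hp ⟨q, fun x hx (hxK : distToSubgroup S C x ≤ l) => ?_⟩
  have hpx : (cayley G S).dist x p ≤ n := by
    rw [dist_comm]
    exact (dist_le _).trans ((q.length_takeUntil_le_length hx).trans (hq ▸ hv))
  have := distToSubgroup_le_add (C := C) hconn x p
  omega

theorem IsDeepComponent.exists_distToSubgroup_eq (hconn : (cayley G S).Connected)
    (hD : IsDeepComponent (cayley G S) (subgroupNbhd S C l) D) {u : G} (hu : u ∈ D) {m : ℕ}
    (hm : distToSubgroup S C u ≤ m) : ∃ w ∈ D, distToSubgroup S C w = m := by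
  obtain ⟨w, hwD, hw⟩ := Set.not_subset.1 (hD.2 m)
  have hmw : m ≤ distToSubgroup S C w := by
    obtain ⟨c, hc, hcw⟩ := exists_dist_eq_distToSubgroup (S := S) (C := C) w
    have hcK : c ∈ subgroupNbhd S C l := by
      simp [subgroupNbhd, distToSubgroup_of_mem hc]
    by_contra! hlt
    exact hw ⟨c, hcK, hcw ▸ hlt.le⟩
  obtain ⟨p, hp⟩ := hD.1.2.2.1 u hu w hwD
  have hLip : ∀ a b, (cayley G S).Adj a b → distToSubgroup S C b ≤ distToSubgroup S C a + 1 :=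
    fun a b hab => (distToSubgroup_le_add hconn a b).trans_eq (by rw [dist_eq_one_iff_adj.2 hab])
  obtain ⟨x, hx, hxm⟩ := p.exists_mem_support_eq_of_le_of_le hLip hm hmw
  exact ⟨x, hD.1.mem_of_reachableAvoiding hu (.of_mem_support hp hx), hxm⟩

theorem IsDeepComponent.exists_ball_subset (hS : S.Finite) (hconn : (cayley G S).Connected)
    (hD : IsDeepComponent (cayley G S) (subgroupNbhd S C l) D) {u : G} (hu : u ∈ D) :
    ∃ K, ∀ n, ∃ p, (cayley G S).dist u p ≤ K + 2 * n ∧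
      ∀ v, (cayley G S).dist p v ≤ n → v ∈ D := by
  obtain ⟨K, hK⟩ := hD.1.exists_short_translate hS hconn
  refine ⟨(cayley G S).dist u 1 + K + 2 * (distToSubgroup S C u + l + 1), fun n => ?_⟩
  set m := distToSubgroup S C u + n + l + 1
  obtain ⟨w, hwD, hwm⟩ := hD.exists_distToSubgroup_eq hconn hu (m := m) (by omega)
  -- translate `w` back by a nearest point of `C`, then into `D` by a short element of `C`
  obtain ⟨c, hc, hcw⟩ := exists_dist_eq_distToSubgroup (S := S) (C := C) w
  have hz : (cayley G S).dist 1 (c⁻¹ * w) = m := by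
    rw [← cayley_dist_mul_left c, mul_one, mul_inv_cancel_left, hcw, hwm]
  obtain ⟨g, hg, hgD, hgK⟩ := hK (c⁻¹ * w) c hc (by rwa [mul_inv_cancel_left])
  have hdepth : distToSubgroup S C (g * (c⁻¹ * w)) = m := by
    rw [distToSubgroup_mul_left hg, distToSubgroup_mul_left (inv_mem hc), hwm]
  refine ⟨g * (c⁻¹ * w), ?_, fun v hv => hD.1.mem_of_dist_le hconn hgD (by omega) hv⟩
  have h1 := hconn.dist_triangle (u := u) (v := 1) (w := g * (c⁻¹ * w))
  have h2 := cayley_dist_one_mul_le hconn g (c⁻¹ * w)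
  omega

end DeepComponent

theorem growthLE_univ_of_forall_ball_subset {G : Type} [Group G] {S : Set G} {U : Set G}
    {u : G} {K : ℕ} (hfin : ∀ n : ℕ, {v | (cayley G S).dist u v ≤ n}.Finite)
    (hconn : (cayley G S).Connected)
    (hU : ∀ n, ∃ p, (cayley G S).dist u p ≤ K + 2 * n ∧
      ∀ v, (cayley G S).dist p v ≤ n → v ∈ U) :
    GrowthLE (graphGrowth (cayley G S) Set.univ {u}) (graphGrowth (cayley G S) U {u}) := by
  refine growthLE_of_le_comp (K + 3) (by omega) fun n => ?_
  obtain ⟨p, hup, hpU⟩ := hU n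
  simp only [graphGrowth_singleton, Set.mem_univ, true_and]
  rw [← cayley_ncard_setOf_dist_le p u n]
  refine Set.ncard_le_ncard (fun v (hv : (cayley G S).dist p v ≤ n) => ⟨hpU v hv, ?_⟩)
    ((hfin _).subset fun v hv => hv.2)
  have := hconn.dist_triangle (u := u) (v := p) (w := v)
  nlinarith

theorem stmt9_general (G : Type) [Group G] (S : Set G) (hS : IsFiniteGenSet S)
    (C : Subgroup G)
    (l : ℕ)
    (L : Set G) (hL : L = {g | ∃ c ∈ (C : Set G), (cayley G S).dist c g ≤ l})
    (U D : Set G) (hD : IsDeepComponent (cayley G S) L D) (hDU : D ⊆ U) :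
    GrowthEqFull (cayley G S) U := by
  rw [setOf_exists_dist_le_eq] at hL
  subst hL
  have hconn := cayley_connected hS.2
  have hfin := hconn.finite_setOf_dist_le (cayley_locFinite hS.1)
  obtain ⟨u, hu⟩ := hD.1.1
  obtain ⟨K, hK⟩ := hD.exists_ball_subset hS.1 hconn hu
  have hKU : ∀ n, ∃ p, (cayley G S).dist u p ≤ K + 2 * n ∧
      ∀ v, (cayley G S).dist p v ≤ n → v ∈ U :=
    fun n => (hK n).imp fun _ hp => ⟨hp.1, fun v hv => hDU (hp.2 v hv)⟩
  exact ⟨u, hDU hu, growthLE_univ_of_forall_ball_subset (hfin u) hconn hKU,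
    growthLE_graphGrowth_univ U (hfin u)⟩

theorem stmt9 (G : Type) [Group G] (S : Set G) (hS : IsFiniteGenSet S)
    (C : Subgroup G) (hC : Subgroup.FG C) (hsplit : SplitsOver G C)
    (l : ℕ) (hl : 0 < l)
    (L : Set G) (hL : L = {g | ∃ c ∈ (C : Set G), (cayley G S).dist c g ≤ l})
    (hdeep : ∃ D₁ D₂ : Set G, IsDeepComponent (cayley G S) L D₁ ∧
      IsDeepComponent (cayley G S) L D₂ ∧ D₁ ≠ D₂)
    (U D : Set G) (hD : IsDeepComponent (cayley G S) L D) (hDU : D ⊆ U) :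
    GrowthEqFull (cayley G S) U :=
  stmt9_general G S hS C l L hL U D hD hDU
end
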